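/- arXiv:1412.8313 — 4 statements merged into one kernel-verified Lean document; each statement's English description precedes it below -/
import Mathlib

section
/- Let λ₁ ≥ λ₂ ≥ ... ≥ λ_n ≥ 0 and μ₁ ≥ μ₂ ≥ ... ≥ μ_n ≥ 0 be two sorted sequences of nonnegative reals, and let π be any permutation of {1,...,n}. Then ∑_{i=1}^n min(λ_i, μ_i) ≥ ∑_{i=1}^n min(λ_i, μ_{π(i)}). -/
/-!
The matrix `G i j = min (lam i) (mu j)` is inverse Monge: for `i ≤ i'` and `j ≤ j'`,
`G i j' + G i' j ≤ G i j + G i' j'`. For such a matrix the identity is an optimal assignment.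
Induct on the support of `σ`: if `i` is its least moved point, then `i ≤ σ i` and `i ≤ σ⁻¹ i`,
so redirecting `i` to itself and `σ⁻¹ i` to `σ i` does not decrease the sum, and it removes `i`
from the support.
-/

open Finset Equiv Equiv.Perm

theorem min_add_min_le_min_add_min {α : Type*} [AddCommMonoid α] [LinearOrder α]
    [IsOrderedAddMonoid α] {a a' b b' : α} (ha : a' ≤ a) (hb : b' ≤ b) :
    min a b' + min a' b ≤ min a b + min a' b' := by
  rcases le_total a' b' with h | h
  · rw [min_eq_left h]
    exact add_le_add (min_le_min_left a hb) (min_le_left a' b)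
  · rw [min_eq_right h, min_eq_right (h.trans ha), add_comm b']
    exact add_le_add (min_le_min_right b ha) le_rfl

theorem Fintype.sum_le_sum_of_add_le_of_eq_off_pair {ι M : Type*} [Fintype ι] [DecidableEq ι]
    [AddCommMonoid M] [PartialOrder M] [IsOrderedAddMonoid M] {f g : ι → M} {i k : ι}
    (hik : i ≠ k) (hpair : f i + f k ≤ g i + g k) (hrest : ∀ x, x ≠ i → x ≠ k → f x = g x) :
    ∑ x, f x ≤ ∑ x, g x := by
  have hcompl : ∑ x ∈ {i, k}ᶜ, f x = ∑ x ∈ {i, k}ᶜ, g x :=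
    Finset.sum_congr rfl fun x hx => by
      simp only [mem_compl, mem_insert, mem_singleton, not_or] at hx
      exact hrest x hx.1 hx.2
  rw [← sum_add_sum_compl {i, k} f, ← sum_add_sum_compl {i, k} g, sum_pair hik, sum_pair hik,
    hcompl]
  gcongr

section Monge

variable {ι M : Type*} [LinearOrder ι] [Fintype ι] [AddCommMonoid M] [PartialOrder M] [IsOrderedAddMonoid M]
  {G : ι → ι → M}

theorem sum_apply_perm_le_sum_apply_swap_mul
    (hG : ∀ ⦃i i' j j'⦄, i ≤ i' → j ≤ j' → G i j' + G i' j ≤ G i j + G i' j')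
    {σ : Perm ι} {i : ι} (hi : σ i ≠ i) (hmin : ∀ j, σ j ≠ j → i ≤ j) :
    ∑ x, G x (σ x) ≤ ∑ x, G x ((swap i (σ i) * σ) x) := by
  set k := σ.symm i
  have hσk : σ k = i := σ.apply_symm_apply i
  have hki : k ≠ i := fun h => hi (h ▸ hσk)
  have hik : i ≤ k := hmin k (by rw [hσk]; exact hki.symm)
  have hiσi : i ≤ σ i := hmin (σ i) fun h => hi (σ.injective h)
  refine Fintype.sum_le_sum_of_add_le_of_eq_off_pair hki.symm ?_ fun x hxi hxk => ?_
  · simpa [hσk, swap_apply_left, swap_apply_right] using hG hik hiσi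
  · rw [Perm.mul_apply, swap_apply_of_ne_of_ne (fun h => hxk (σ.injective (h.trans hσk.symm)))
      (fun h => hxi (σ.injective h))]

theorem sum_apply_perm_le_sum_apply_self
    (hG : ∀ ⦃i i' j j'⦄, i ≤ i' → j ≤ j' → G i j' + G i' j ≤ G i j + G i' j') (σ : Perm ι) :
    ∑ x, G x (σ x) ≤ ∑ x, G x x := by
  obtain rfl | hσ := eq_or_ne σ 1
  · rfl
  have hsupp : σ.support.Nonempty := nonempty_iff_ne_empty.mpr (support_eq_empty_iff.not.mpr hσ)
  set i := σ.support.min' hsupp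
  have hi : σ i ≠ i := mem_support.mp (min'_mem _ hsupp)
  calc ∑ x, G x (σ x) ≤ ∑ x, G x ((swap i (σ i) * σ) x) :=
        sum_apply_perm_le_sum_apply_swap_mul hG hi fun j hj => min'_le _ j (mem_support.mpr hj)
    _ ≤ ∑ x, G x x := sum_apply_perm_le_sum_apply_self hG (swap i (σ i) * σ)
termination_by #σ.support
decreasing_by exact card_support_swap_mul hi

end Monge

theorem stmt_4_general (n : ℕ) (lam mu : Fin n → ℝ)
    (hlam_sorted : Antitone lam) (hmu_sorted : Antitone mu)
    (π : Equiv.Perm (Fin n)) :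
    ∑ i, min (lam i) (mu (π i)) ≤ ∑ i, min (lam i) (mu i) :=
  sum_apply_perm_le_sum_apply_self (G := fun i j => min (lam i) (mu j))
    (fun _ _ _ _ hi hj => min_add_min_le_min_add_min (hlam_sorted hi) (hmu_sorted hj)) π

theorem stmt_4 (n : ℕ) (lam mu : Fin n → ℝ)
    (hlam_sorted : Antitone lam) (hmu_sorted : Antitone mu)
    (hlam_nonneg : ∀ i, 0 ≤ lam i) (hmu_nonneg : ∀ i, 0 ≤ mu i)
    (π : Equiv.Perm (Fin n)) :
    ∑ i, min (lam i) (mu (π i)) ≤ ∑ i, min (lam i) (mu i) :=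
  stmt_4_general n lam mu hlam_sorted hmu_sorted π
end

section
/- Let f: ℝ≥0 → ℝ be nondecreasing, λ₁ ≥ ... ≥ λ_n ≥ 0, μ₁ ≥ ... ≥ μ_n ≥ 0, and π a permutation of {1,...,n}. Then ∑_i f(min(λ_i, μ_i)) ≥ ∑_i f(min(λ_i, μ_{π(i)})). -/
open Finset

private lemma exch_min (f : ℝ → ℝ) (hf : MonotoneOn f (Set.Ici 0))
    (p q r t : ℝ) (hp : 0 ≤ p) (hq : 0 ≤ q) (hr : 0 ≤ r) (ht : 0 ≤ t)
    (hqp : q ≤ p) (htr : t ≤ r) :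
    f (min p t) + f (min q r) ≤ f (min p r) + f (min q t) := by
  have hmem : ∀ x y : ℝ, 0 ≤ x → 0 ≤ y → min x y ∈ Set.Ici 0 := by
    intro x y hx hy; exact le_min hx hy
  have hmin : min (min p t) (min q r) = min q t := by
    apply le_antisymm
    · exact le_min (le_trans (min_le_right _ _) (min_le_left q r))
        (le_trans (min_le_left _ _) (min_le_right p t))
    · exact le_min (le_min (le_trans (min_le_left q t) hqp) (min_le_right q t))
        (le_min (min_le_left q t) (le_trans (min_le_right q t) htr))
  rcases le_total (min p t) (min q r) with h | h
  · have h1 : min p t = min q t := by rw [← hmin, min_eq_left h]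
    have h2 : f (min q r) ≤ f (min p r) := by
      apply hf (hmem _ _ hq hr) (hmem _ _ hp hr)
      exact min_le_min hqp le_rfl
    rw [h1]; linarith
  · have h1 : min q r = min q t := by rw [← hmin, min_eq_right h]
    have h2 : f (min p t) ≤ f (min p r) := by
      apply hf (hmem _ _ hp ht) (hmem _ _ hp hr)
      exact min_le_min le_rfl htr
    rw [h1]; linarith

private lemma rearrange_key (n : ℕ) (g : Fin n → Fin n → ℝ)
    (hex : ∀ a b c d : Fin n, a ≤ b → c ≤ d → g a d + g b c ≤ g a c + g b d) :
    ∀ (σ : Equiv.Perm (Fin n)), ∑ i, g i (σ i) ≤ ∑ i, g i i := by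
  suffices h : ∀ (m : ℕ) (σ : Equiv.Perm (Fin n)),
      (univ.filter fun k => σ k ≠ k).card ≤ m → ∑ i, g i (σ i) ≤ ∑ i, g i i by
    intro σ; exact h _ σ le_rfl
  intro m
  induction m with
  | zero =>
    intro σ hcard
    have hfix : ∀ k, σ k = k := by
      intro k
      by_contra hk
      have hk' : k ∈ univ.filter fun k => σ k ≠ k := by simp [hk]
      have := card_pos.mpr ⟨k, hk'⟩
      omega
    simp [hfix]
  | succ m ih =>
    intro σ hcard
    by_cases hfixall : ∀ k, σ k = k
    · simp [hfixall]
    push_neg at hfixall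
    obtain ⟨k₀, hk₀⟩ := hfixall
    set s := univ.filter fun k => σ k ≠ k with hs
    have hsne : s.Nonempty := ⟨k₀, by simp [hs, hk₀]⟩
    set i := s.min' hsne with hi
    have hiσ : σ i ≠ i := by have := s.min'_mem hsne; simpa [hs] using this
    have hminle : ∀ k, σ k ≠ k → i ≤ k := fun k hk => s.min'_le k (by simp [hs, hk])
    have hilt : i ≤ σ i := by
      by_contra h
      push_neg at h
      have hfixσi : σ (σ i) = σ i := by
        by_contra hc
        exact absurd (hminle _ hc) (not_le.mpr h)
      exact hiσ (σ.injective hfixσi)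
    set j := σ.symm i with hj
    have hσj : σ j = i := σ.apply_symm_apply i
    have hjne : j ≠ i := by
      intro h
      apply hiσ
      rw [← h, hσj, h]
    have hij : i ≤ j := by
      apply hminle
      rw [hσj]
      exact fun h => hjne h.symm
    set σ' : Equiv.Perm (Fin n) := σ * Equiv.swap i j with hσ'
    have hσ'i : σ' i = i := by
      simp [hσ', Equiv.swap_apply_left, hσj]
    have hσ'j : σ' j = σ i := by
      simp [hσ', Equiv.swap_apply_right]
    have hσ'k : ∀ k, k ≠ i → k ≠ j → σ' k = σ k := by
      intro k h1 h2
      simp [hσ', Equiv.swap_apply_of_ne_of_ne h1 h2]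
    -- nonfixed set of σ' is contained in s.erase i
    have hsub : (univ.filter fun k => σ' k ≠ k) ⊆ s.erase i := by
      intro k hk
      simp only [mem_filter, mem_univ, true_and] at hk
      rcases eq_or_ne k i with rfl | hki
      · exact absurd hσ'i hk
      rcases eq_or_ne k j with rfl | hkj
      · refine mem_erase.mpr ⟨hki, ?_⟩
        simp only [hs, mem_filter, mem_univ, true_and, hσj]
        exact fun h => hjne h.symm
      · refine mem_erase.mpr ⟨hki, ?_⟩
        rw [hσ'k k hki hkj] at hk
        simp [hs, hk]
    have hcard' : (univ.filter fun k => σ' k ≠ k).card ≤ m := by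
      have h1 := card_le_card hsub
      have h2 : (s.erase i).card = s.card - 1 := card_erase_of_mem (s.min'_mem hsne)
      have h3 : 1 ≤ s.card := card_pos.mpr hsne
      omega
    -- split sums at i and j
    have hsplit : ∀ (τ : Fin n → Fin n), ∑ k, g k (τ k)
        = g i (τ i) + (g j (τ j) + ∑ k ∈ (univ.erase i).erase j, g k (τ k)) := by
      intro τ
      rw [← Finset.add_sum_erase _ _ (mem_univ i),
        ← Finset.add_sum_erase _ _ (mem_erase.mpr ⟨hjne, mem_univ j⟩)]
    have hstep : ∑ k, g k (σ k) ≤ ∑ k, g k (σ' k) := by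
      rw [hsplit (fun k => σ k), hsplit (fun k => σ' k)]
      have hrest : ∑ k ∈ (univ.erase i).erase j, g k (σ k)
          = ∑ k ∈ (univ.erase i).erase j, g k (σ' k) := by
        apply Finset.sum_congr rfl
        intro k hk
        simp only [mem_erase] at hk
        rw [hσ'k k hk.2.1 hk.1]
      rw [hrest]
      have := hex i j i (σ i) hij hilt
      rw [hσ'i, hσ'j, hσj]
      linarith
    exact le_trans hstep (ih σ' hcard')

theorem stmt_5 (n : ℕ) (f : ℝ → ℝ) (hf : MonotoneOn f (Set.Ici 0))
    (lam mu : Fin n → ℝ)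
    (hlam_sorted : Antitone lam) (hmu_sorted : Antitone mu)
    (hlam_nonneg : ∀ i, 0 ≤ lam i) (hmu_nonneg : ∀ i, 0 ≤ mu i)
    (π : Equiv.Perm (Fin n)) :
    ∑ i, f (min (lam i) (mu (π i))) ≤ ∑ i, f (min (lam i) (mu i)) := by
  exact rearrange_key n (fun i j => f (min (lam i) (mu j)))
    (fun a b c d hab hcd =>
      exch_min f hf (lam a) (lam b) (mu c) (mu d)
        (hlam_nonneg a) (hlam_nonneg b) (hmu_nonneg c) (hmu_nonneg d)
        (hlam_sorted hab) (hmu_sorted hcd)) π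
end

section
/- Consider maximizing ∑_{n=1}^N min(log₂(1 + a_n μ_n), log₂(1 + b_n ν_n)) over μ, ν ≥ 0 with ∑ μ_n ≤ 1 and ∑ ν_n ≤ 1, where a_n, b_n > 0. Then there exists an optimal solution (μ*, ν*) with a_n μ*_n = b_n ν*_n for every n, i.e., the two per-hop SNRs are equal on every subchannel pair. -/
lemma min_logb_eq (x y : ℝ) (hx : 0 ≤ x) (hy : 0 ≤ y) :
    min (Real.logb 2 (1 + x)) (Real.logb 2 (1 + y)) = Real.logb 2 (1 + min x y) := by
  rcases le_total x y with h | h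
  · rw [min_eq_left h, min_eq_left]
    exact Real.logb_le_logb_of_le one_lt_two (by linarith) (by linarith)
  · rw [min_eq_right h, min_eq_right]
    exact Real.logb_le_logb_of_le one_lt_two (by linarith) (by linarith)

theorem stmt_9 (N : ℕ) (a b : Fin N → ℝ) (ha : ∀ n, 0 < a n) (hb : ∀ n, 0 < b n) :
    ∃ μs νs : Fin N → ℝ,
      ((∀ n, 0 ≤ μs n) ∧ (∀ n, 0 ≤ νs n) ∧ ∑ n, μs n ≤ 1 ∧ ∑ n, νs n ≤ 1) ∧
      (∀ μ ν : Fin N → ℝ,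
        (∀ n, 0 ≤ μ n) → (∀ n, 0 ≤ ν n) → ∑ n, μ n ≤ 1 → ∑ n, ν n ≤ 1 →
        ∑ n, min (Real.logb 2 (1 + a n * μ n)) (Real.logb 2 (1 + b n * ν n)) ≤
          ∑ n, min (Real.logb 2 (1 + a n * μs n)) (Real.logb 2 (1 + b n * νs n))) ∧
      (∀ n, a n * μs n = b n * νs n) := by
  classical
  set S : Set ((Fin N → ℝ) × (Fin N → ℝ)) :=
    {p | (∀ n, 0 ≤ p.1 n) ∧ (∀ n, 0 ≤ p.2 n) ∧ ∑ n, p.1 n ≤ 1 ∧ ∑ n, p.2 n ≤ 1} with hS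
  set f : ((Fin N → ℝ) × (Fin N → ℝ)) → ℝ := fun p =>
    ∑ n, min (Real.logb 2 (1 + a n * p.1 n)) (Real.logb 2 (1 + b n * p.2 n)) with hf
  -- S is closed
  have hclosed : IsClosed S := by
    have h1 : IsClosed {p : (Fin N → ℝ) × (Fin N → ℝ) | ∀ n, 0 ≤ p.1 n} := by
      have : {p : (Fin N → ℝ) × (Fin N → ℝ) | ∀ n, 0 ≤ p.1 n} =
          ⋂ n, {p | 0 ≤ p.1 n} := by ext p; simp
      rw [this]
      exact isClosed_iInter fun n =>
        isClosed_le continuous_const ((continuous_apply n).comp continuous_fst)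
    have h2 : IsClosed {p : (Fin N → ℝ) × (Fin N → ℝ) | ∀ n, 0 ≤ p.2 n} := by
      have : {p : (Fin N → ℝ) × (Fin N → ℝ) | ∀ n, 0 ≤ p.2 n} =
          ⋂ n, {p | 0 ≤ p.2 n} := by ext p; simp
      rw [this]
      exact isClosed_iInter fun n =>
        isClosed_le continuous_const ((continuous_apply n).comp continuous_snd)
    have h3 : IsClosed {p : (Fin N → ℝ) × (Fin N → ℝ) | ∑ n, p.1 n ≤ 1} :=
      isClosed_le (continuous_finset_sum _ fun n _ => (continuous_apply n).comp continuous_fst)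
        continuous_const
    have h4 : IsClosed {p : (Fin N → ℝ) × (Fin N → ℝ) | ∑ n, p.2 n ≤ 1} :=
      isClosed_le (continuous_finset_sum _ fun n _ => (continuous_apply n).comp continuous_snd)
        continuous_const
    have : S = {p : (Fin N → ℝ) × (Fin N → ℝ) | ∀ n, 0 ≤ p.1 n} ∩
        ({p | ∀ n, 0 ≤ p.2 n} ∩ ({p | ∑ n, p.1 n ≤ 1} ∩ {p | ∑ n, p.2 n ≤ 1})) := by
      ext p; simp [hS, and_assoc]
    rw [this]
    exact h1.inter (h2.inter (h3.inter h4))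
  -- S is compact
  have hcompact : IsCompact S := by
    refine IsCompact.of_isClosed_subset (isCompact_Icc (a := ((0, 0) : (Fin N → ℝ) × (Fin N → ℝ)))
      (b := (1, 1))) hclosed ?_
    rintro p ⟨h1, h2, h3, h4⟩
    constructor
    · exact ⟨fun n => h1 n, fun n => h2 n⟩
    · constructor
      · intro n
        calc p.1 n ≤ ∑ m, p.1 m := Finset.single_le_sum (fun m _ => h1 m) (Finset.mem_univ n)
        _ ≤ 1 := h3
      · intro n
        calc p.2 n ≤ ∑ m, p.2 m := Finset.single_le_sum (fun m _ => h2 m) (Finset.mem_univ n)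
        _ ≤ 1 := h4
  have hne : S.Nonempty := ⟨(0, 0), by simp [hS]⟩
  -- f continuous on S
  have hcont : ContinuousOn f S := by
    apply continuousOn_finset_sum
    intro n _
    apply ContinuousOn.inf
    · have hmaps : ∀ p ∈ S, (1 + a n * p.1 n) ∈ ({0}ᶜ : Set ℝ) := by
        intro p hp
        have := hp.1 n
        have := (ha n).le
        simp only [Set.mem_compl_iff, Set.mem_singleton_iff]
        nlinarith [mul_nonneg (ha n).le (hp.1 n)]
      have hc : ContinuousOn (fun p : (Fin N → ℝ) × (Fin N → ℝ) => Real.log (1 + a n * p.1 n)) S :=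
        Real.continuousOn_log.comp
          (continuous_const.add (continuous_const.mul
            ((continuous_apply n).comp continuous_fst))).continuousOn hmaps
      simpa [Real.logb] using hc.div_const (Real.log 2)
    · have hmaps : ∀ p ∈ S, (1 + b n * p.2 n) ∈ ({0}ᶜ : Set ℝ) := by
        intro p hp
        simp only [Set.mem_compl_iff, Set.mem_singleton_iff]
        nlinarith [mul_nonneg (hb n).le (hp.2.1 n)]
      have hc : ContinuousOn (fun p : (Fin N → ℝ) × (Fin N → ℝ) => Real.log (1 + b n * p.2 n)) S :=
        Real.continuousOn_log.comp
          (continuous_const.add (continuous_const.mul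
            ((continuous_apply n).comp continuous_snd))).continuousOn hmaps
      simpa [Real.logb] using hc.div_const (Real.log 2)
  obtain ⟨p, hpS, hpmax⟩ := hcompact.exists_isMaxOn hne hcont
  obtain ⟨hμ0, hν0, hμ1, hν1⟩ := hpS
  set μ := p.1
  set ν := p.2
  -- key: a n * μs n = min (a n * μ n) (b n * ν n) = b n * νs n
  have hkey1 : ∀ n, a n * min (μ n) (b n * ν n / a n) = min (a n * μ n) (b n * ν n) := by
    intro n
    rw [mul_min_of_nonneg _ _ (ha n).le, mul_div_cancel₀ _ (ha n).ne']
  have hkey2 : ∀ n, b n * min (ν n) (a n * μ n / b n) = min (b n * ν n) (a n * μ n) := by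
    intro n
    rw [mul_min_of_nonneg _ _ (hb n).le, mul_div_cancel₀ _ (hb n).ne']
  have hval : ∀ n, min (Real.logb 2 (1 + a n * min (μ n) (b n * ν n / a n)))
      (Real.logb 2 (1 + b n * min (ν n) (a n * μ n / b n))) =
      min (Real.logb 2 (1 + a n * μ n)) (Real.logb 2 (1 + b n * ν n)) := by
    intro n
    rw [hkey1, hkey2, min_comm (b n * ν n), min_self,
      min_logb_eq _ _ (mul_nonneg (ha n).le (hμ0 n)) (mul_nonneg (hb n).le (hν0 n))]
  -- balanced modification
  refine ⟨fun n => min (μ n) (b n * ν n / a n), fun n => min (ν n) (a n * μ n / b n), ?_, ?_, ?_⟩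
  · refine ⟨fun n => le_min (hμ0 n) (div_nonneg (mul_nonneg (hb n).le (hν0 n)) (ha n).le),
      fun n => le_min (hν0 n) (div_nonneg (mul_nonneg (ha n).le (hμ0 n)) (hb n).le), ?_, ?_⟩
    · exact le_trans (Finset.sum_le_sum fun n _ => min_le_left _ _) hμ1
    · exact le_trans (Finset.sum_le_sum fun n _ => min_le_left _ _) hν1
  · intro μ' ν' h1 h2 h3 h4
    have := hpmax (a := (μ', ν')) ⟨h1, h2, h3, h4⟩
    simp only [hf] at this
    calc ∑ n, min (Real.logb 2 (1 + a n * μ' n)) (Real.logb 2 (1 + b n * ν' n))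
        ≤ ∑ n, min (Real.logb 2 (1 + a n * μ n)) (Real.logb 2 (1 + b n * ν n)) := this
      _ = _ := by rw [Finset.sum_congr rfl fun n _ => (hval n).symm]
  · intro n
    rw [hkey1, hkey2, min_comm (b n * ν n)]
end

section
/- Let λ₁ ≥ ... ≥ λ_n ≥ 0 and μ₁ ≥ ... ≥ μ_n ≥ 0. Then for every permutation π, min_{1≤i≤n} min(λ_i, μ_{π(i)}) ≤ min_{1≤i≤n} min(λ_i, μ_i); that is, among all permutations π the identity permutation maximizes min_i min(λ_i, μ_{π(i)}). -/
lemma pigeon_aux {n : ℕ} (σ : Equiv.Perm (Fin n)) (j : Fin n) :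
    ∃ i, i ≤ j ∧ j ≤ σ i := by
  by_contra h
  push_neg at h
  have hsub : ∀ i ∈ Finset.Iic j, σ i ∈ Finset.Iio j := by
    intro i hi
    simp only [Finset.mem_Iic] at hi
    simpa using h i hi
  have hcard := Finset.card_le_card_of_injOn σ hsub
    (fun a _ b _ hab => σ.injective hab)
  rw [Fin.card_Iic, Fin.card_Iio] at hcard
  omega

theorem stmt_18 (n : ℕ) (hn : 0 < n) (lam mu : Fin n → ℝ)
    (hlam_sorted : Antitone lam) (hmu_sorted : Antitone mu)
    (hlam_nonneg : ∀ i, 0 ≤ lam i) (hmu_nonneg : ∀ i, 0 ≤ mu i)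
    (π : Equiv.Perm (Fin n)) :
    ⨅ i, min (lam i) (mu (π i)) ≤ ⨅ i, min (lam i) (mu i) := by
  have hbdd : BddBelow (Set.range fun i => min (lam i) (mu (π i))) :=
    (Set.finite_range _).bddBelow
  have : Nonempty (Fin n) := ⟨⟨0, hn⟩⟩
  apply le_ciInf
  intro j
  rcases le_total (mu j) (lam j) with h | h
  · obtain ⟨i, hij, hji⟩ := pigeon_aux π j
    refine le_trans (ciInf_le hbdd i) ?_
    calc min (lam i) (mu (π i)) ≤ mu (π i) := min_le_right _ _
      _ ≤ mu j := hmu_sorted hji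
      _ ≤ min (lam j) (mu j) := le_min h le_rfl
  · obtain ⟨k, hkj, hjk⟩ := pigeon_aux π.symm j
    refine le_trans (ciInf_le hbdd (π.symm k)) ?_
    calc min (lam (π.symm k)) (mu (π (π.symm k))) ≤ lam (π.symm k) := min_le_left _ _
      _ ≤ lam j := hlam_sorted hjk
      _ ≤ min (lam j) (mu j) := le_min le_rfl h
end
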